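/- arXiv:1010.3142 — 5 statements merged into one kernel-verified Lean document; each statement's English description precedes it below -/
import Mathlib

section
/- Let b ≥ 2 be an integer and φ as defined (φ(s) = (2/3)·e·b·e^{−bs} for s > 1/b, φ(s) = (2/3)·b²·s for 0 < s ≤ 1/b, φ(s) = 0 for s ≤ 0). Then for all s, s' > 0, φ(s+s')/φ(s) ≥ e^{−b s'}. -/
open Real

/-- The piecewise density φ with parameter b. -/
noncomputable def phi (b : ℤ) (s : ℝ) : ℝ :=
  if s ≤ 0 then 0
  else if s ≤ 1 / b then (2 / 3) * (b : ℝ) ^ 2 * s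
  else (2 / 3) * Real.exp 1 * (b : ℝ) * Real.exp (-(b : ℝ) * s)

/-!
Writing `u = min (b s) 1`, one has `φ(s) e^{b s} = (2/3) b u e^u` for `s > 0`, which is
nondecreasing in `s`. Hence `φ(s + s') e^{b (s + s')} ≥ φ(s) e^{b s}`.
-/

section

variable {b : ℤ} {s : ℝ}

theorem phi_pos (hb : 0 < b) (hs : 0 < s) : 0 < phi b s := by
  have hb' : (0 : ℝ) < b := by exact_mod_cast hb
  unfold phi
  split_ifs <;> first | linarith | positivity

theorem phi_mul_exp_eq (hb : 0 < b) (hs : 0 < s) :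
    phi b s * exp (b * s) = 2 / 3 * b * (min (b * s) 1 * exp (min (b * s) 1)) := by
  have hb' : (0 : ℝ) < b := by exact_mod_cast hb
  unfold phi
  rw [if_neg (not_le.mpr hs)]
  split_ifs with hsb
  · rw [min_eq_left ((le_div_iff₀' hb').mp hsb)]
    ring
  · rw [min_eq_right ((div_lt_iff₀' hb').mp (not_le.mp hsb)).le, mul_assoc _ (exp _),
      ← exp_add]
    ring_nf
    rw [exp_zero, mul_one]

theorem phi_mul_exp_monotoneOn (hb : 0 < b) :
    MonotoneOn (fun s => phi b s * exp (b * s)) (Set.Ioi 0) := by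
  have hb' : (0 : ℝ) < b := by exact_mod_cast hb
  intro s hs t ht hst
  simp only [phi_mul_exp_eq hb hs, phi_mul_exp_eq hb ht]
  have hu : min (b * s) 1 ≤ min (b * t) 1 :=
    min_le_min_right 1 (mul_le_mul_of_nonneg_left hst hb'.le)
  have hu₀ : 0 ≤ min (b * s) 1 := le_min (mul_nonneg hb'.le (le_of_lt hs)) zero_le_one
  gcongr
  exact hu₀.trans hu

end

theorem phi_ratio_ge (b : ℤ) (hb : 2 ≤ b) :
    ∀ s s' : ℝ, 0 < s → 0 < s' →
      phi b (s + s') / phi b s ≥ Real.exp (-(b : ℝ) * s') := by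
  intro s s' hs hs'
  have hb₀ : 0 < b := by omega
  have hmono : phi b s * exp (b * s) ≤ phi b (s + s') * exp (b * (s + s')) :=
    phi_mul_exp_monotoneOn hb₀ hs (Set.mem_Ioi.mpr (by linarith)) (by linarith)
  rw [ge_iff_le, le_div_iff₀ (phi_pos hb₀ hs)]
  calc exp (-b * s') * phi b s
      = phi b s * exp (b * s) * exp (-(b * (s + s'))) := by
        rw [mul_assoc, ← exp_add]; ring_nf
    _ ≤ phi b (s + s') * exp (b * (s + s')) * exp (-(b * (s + s'))) := by gcongr
    _ = phi b (s + s') := by rw [mul_assoc, ← exp_add, add_neg_cancel, exp_zero, mul_one]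
end

section
/- Let b ≥ 2 be an integer and φ as defined, with Φ(s) = ∫_{−∞}^s φ(s') ds'. Then the mean of Φ, namely ∫_0^∞ (1 − Φ(s)) ds, is at most 2/b. -/
open Real MeasureTheory

/-- The CDF of φ. -/
noncomputable def Phi (b : ℤ) (s : ℝ) : ℝ := ∫ s' in Set.Iic s, phi b s'

/-!
The two branches of φ agree at `1/b`, so φ is continuous and Φ can be computed by the
fundamental theorem of calculus: `Φ(s) = b²s²/3` on `[0, 1/b]` and `Φ(s) = 1 - (2/3)e^{1-bs}`
beyond. Integrating `1 - Φ` over the two pieces gives `8/(9b) + 2/(3b) = 14/(9b) ≤ 2/b`.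
-/

open Set intervalIntegral

section

variable {b : ℤ} {s : ℝ}

lemma phi_of_nonpos (h : s ≤ 0) : phi b s = 0 := if_pos h

lemma phi_of_nonneg_of_le_inv (h0 : 0 ≤ s) (h1 : s ≤ 1 / b) :
    phi b s = (2 / 3) * (b : ℝ) ^ 2 * s := by
  rcases h0.eq_or_lt with rfl | h0
  · simp [phi_of_nonpos]
  · rw [phi, if_neg h0.not_ge, if_pos h1]

lemma phi_of_inv_le (hb : 0 < b) (h1 : 1 / b ≤ s) :
    phi b s = (2 / 3) * exp 1 * b * exp (-b * s) := by
  have hb' : (0 : ℝ) < b := by exact_mod_cast hb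
  rcases h1.eq_or_lt with rfl | h1
  · rw [phi_of_nonneg_of_le_inv (by positivity) le_rfl,
      show -(b : ℝ) * (1 / b) = -1 by field_simp, exp_neg]
    field_simp
  · rw [phi, if_neg (((one_div_pos.2 hb').trans h1).not_ge), if_neg h1.not_ge]

lemma continuous_phi (hb : 0 < b) : Continuous (phi b) := by
  have hb' : (0 : ℝ) < b := by exact_mod_cast hb
  refine continuous_if_le continuous_id continuous_const continuousOn_const
    (Continuous.continuousOn ?_) fun x hx => ?_
  · refine continuous_if_le continuous_id continuous_const (by fun_prop) (by fun_prop)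
      fun x hx => ?_
    rw [← phi_of_nonneg_of_le_inv (b := b) (by rw [hx]; positivity) hx.le,
      phi_of_inv_le hb hx.ge]
  · simp only [hx, if_true, one_div_nonneg.2 hb'.le]
    ring

lemma integrableOn_phi_Iic_zero : IntegrableOn (phi b) (Iic 0) :=
  integrableOn_zero.congr_fun (fun _ hx => (phi_of_nonpos hx).symm) measurableSet_Iic

lemma Phi_eq_intervalIntegral (hb : 0 < b) (hs : 0 ≤ s) : Phi b s = ∫ x in 0..s, phi b x := by
  have hint : IntegrableOn (phi b) (Ioc 0 s) :=
    ((continuous_phi hb).integrableOn_Icc).mono_set Ioc_subset_Icc_self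
  rw [Phi, ← Iic_union_Ioc_eq_Iic hs,
    setIntegral_union (Iic_disjoint_Ioc le_rfl) measurableSet_Ioc integrableOn_phi_Iic_zero hint,
    setIntegral_eq_zero_of_forall_eq_zero (t := Iic 0) fun _ hx => phi_of_nonpos hx, zero_add,
    integral_of_le hs]

lemma Phi_of_nonneg_of_le_inv (hb : 0 < b) (h0 : 0 ≤ s) (h1 : s ≤ 1 / b) :
    Phi b s = (b : ℝ) ^ 2 * s ^ 2 / 3 := by
  rw [Phi_eq_intervalIntegral hb h0, integral_congr (g := fun x => (2 / 3) * (b : ℝ) ^ 2 * x)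
    fun x hx => ?_]
  · rw [intervalIntegral.integral_const_mul, integral_id]
    ring
  · rw [uIcc_of_le h0] at hx
    exact phi_of_nonneg_of_le_inv hx.1 (hx.2.trans h1)

lemma Phi_of_inv_le (hb : 0 < b) (h1 : 1 / b ≤ s) :
    Phi b s = 1 - (2 / 3) * exp 1 * exp (-b * s) := by
  have hb' : (0 : ℝ) < b := by exact_mod_cast hb
  have hinv : (0 : ℝ) ≤ 1 / b := by positivity
  have hderiv : ∀ x, HasDerivAt (fun x => -(2 / 3) * exp 1 * exp (-b * x))
      ((2 / 3) * exp 1 * b * exp (-b * x)) x := fun x => by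
    refine ((((hasDerivAt_id' x).const_mul (-(b : ℝ))).exp).const_mul
      (-(2 / 3) * exp 1)).congr_deriv ?_
    ring
  rw [Phi_eq_intervalIntegral hb (hinv.trans h1),
    ← integral_add_adjacent_intervals (b := 1 / b) ((continuous_phi hb).intervalIntegrable _ _)
      ((continuous_phi hb).intervalIntegrable _ _),
    ← Phi_eq_intervalIntegral hb hinv, Phi_of_nonneg_of_le_inv hb hinv le_rfl,
    integral_congr (g := fun x => (2 / 3) * exp 1 * b * exp (-b * x)) fun x hx => ?_,
    integral_eq_sub_of_hasDerivAt (fun x _ => hderiv x)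
      ((by fun_prop : Continuous _).intervalIntegrable _ _)]
  · rw [show -(b : ℝ) * (1 / b) = -1 by field_simp, exp_neg]
    field_simp
    ring
  · rw [uIcc_of_le h1] at hx
    exact phi_of_inv_le hb hx.1

lemma one_sub_Phi_eqOn_Ioc (hb : 0 < b) :
    EqOn (fun s => 1 - Phi b s) (fun s => 1 - (b : ℝ) ^ 2 * s ^ 2 / 3) (Ioc 0 (1 / b)) :=
  fun _ hs => by simp only [Phi_of_nonneg_of_le_inv hb hs.1.le hs.2]

lemma one_sub_Phi_eqOn_Ioi (hb : 0 < b) :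
    EqOn (fun s => 1 - Phi b s) (fun s => (2 / 3) * exp 1 * exp (-b * s)) (Ioi (1 / b)) :=
  fun _ hs => by simp only [Phi_of_inv_le hb (le_of_lt hs), sub_sub_cancel]

lemma integral_one_sub_Phi_Ioc (hb : 0 < b) :
    ∫ s in Ioc 0 (1 / (b : ℝ)), (1 - Phi b s) = 8 / (9 * b) := by
  have hb' : (0 : ℝ) < b := by exact_mod_cast hb
  rw [setIntegral_congr_fun measurableSet_Ioc (one_sub_Phi_eqOn_Ioc hb),
    ← integral_of_le (by positivity), intervalIntegral.integral_sub intervalIntegrable_const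
      ((by fun_prop : Continuous _).intervalIntegrable _ _), intervalIntegral.integral_const,
    intervalIntegral.integral_div, intervalIntegral.integral_const_mul, integral_pow, smul_eq_mul]
  norm_num
  field_simp
  ring

lemma integral_one_sub_Phi_Ioi_inv (hb : 0 < b) :
    ∫ s in Ioi (1 / (b : ℝ)), (1 - Phi b s) = 2 / (3 * b) := by
  have hb' : (0 : ℝ) < b := by exact_mod_cast hb
  rw [setIntegral_congr_fun measurableSet_Ioi (one_sub_Phi_eqOn_Ioi hb),
    MeasureTheory.integral_const_mul, integral_exp_mul_Ioi (neg_neg_of_pos hb'),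
    show -(b : ℝ) * (1 / b) = -1 by field_simp, exp_neg]
  field_simp

lemma integral_one_sub_Phi_Ioi_zero (hb : 0 < b) :
    ∫ s in Ioi 0, (1 - Phi b s) = 14 / (9 * b) := by
  have hb' : (0 : ℝ) < b := by exact_mod_cast hb
  have hIoc : IntegrableOn (fun s => 1 - Phi b s) (Ioc 0 (1 / b)) :=
    (Continuous.integrableOn_Ioc (by fun_prop)).congr_fun (one_sub_Phi_eqOn_Ioc hb).symm
      measurableSet_Ioc
  have hIoi : IntegrableOn (fun s => 1 - Phi b s) (Ioi (1 / b)) :=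
    IntegrableOn.congr_fun ((integrableOn_exp_mul_Ioi (neg_neg_of_pos hb') _).const_mul _)
      (one_sub_Phi_eqOn_Ioi hb).symm measurableSet_Ioi
  rw [← Ioc_union_Ioi_eq_Ioi (by positivity : (0 : ℝ) ≤ 1 / b),
    setIntegral_union (Ioc_disjoint_Ioi le_rfl) measurableSet_Ioi hIoc hIoi,
    integral_one_sub_Phi_Ioc hb, integral_one_sub_Phi_Ioi_inv hb]
  field_simp
  ring

end

theorem Phi_mean_le (b : ℤ) (hb : 2 ≤ b) :
    ∫ s in Set.Ioi (0 : ℝ), (1 - Phi b s) ≤ 2 / b := by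
  have hb' : (0 : ℝ) < b := by exact_mod_cast (show 0 < b by omega)
  rw [integral_one_sub_Phi_Ioi_zero (by omega), div_le_div_iff₀ (by positivity) hb']
  linarith
end

section
/- Let A(t) be the number of renewals by time t of a (possibly delayed) renewal process with interarrival times W(1), W(2), … where W(2), W(3), … are i.i.d. nonnegative with mean β > 0, and let Y(1), Y(2), … be i.i.d. random variables in [0,1] with mean m, independent of the W's. Then for any given ε ∈ (0,1] there is a constant C > 0, not depending on the distribution of Y(1), such that for all sufficiently large t, P(∑_{k=1}^{A(t)} Y(k) > (1+ε)·β^{−1}·m·t) ≤ e^{−C·m·t}. -/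
/-!
Put `N = ⌈(1 + ε/2) t / β⌉`. If the reward collected by time `t` exceeds `(1 + ε) m t / β`, then
either fewer than `N` renewals occur by time `t`, i.e. `W 0 + ⋯ + W (N - 1) ≤ t`, or the first `N`
rewards already exceed `(1 + ε) m t / β`. The first event is a lower large deviation of a sum of
mean about `(1 + ε/2) t`; a Chernoff bound, with the moment generating function of `W 1` on the
negative axis controlled by truncating `W 1`, gives it probability `o(e^{-c t})`. The second event
has probability at most `e^{-2 c' m t}` by the Chernoff bound for `[0, 1]`-valued summands, and at
most a constant `q² < 1` by Markov's inequality; hence at most `q e^{-c' m t}`. Since `m ≤ 1`, the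
two bounds add up to `e^{-C m t}` with `C = min c c'`, which does not depend on the law of the
rewards.
-/

open MeasureTheory ProbabilityTheory Real Filter Finset Topology

lemma exp_mul_le_one_add_mul_exp_sub_one {y : ℝ} (hy : y ∈ Set.Icc (0 : ℝ) 1) (θ : ℝ) :
    exp (θ * y) ≤ 1 + y * (exp θ - 1) := by
  have h := convexOn_exp.2 (Set.mem_univ 0) (Set.mem_univ θ) (sub_nonneg.2 hy.2) hy.1
    (sub_add_cancel 1 y)
  simp only [smul_eq_mul, mul_zero, zero_add, exp_zero, mul_one] at h
  rw [mul_comm θ y]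
  linarith

lemma exists_pos_mul_exp_sub_one_lt {a b : ℝ} (ha : 0 ≤ a) (hab : a < b) :
    ∃ θ > 0, a * (exp θ - 1) < b * θ := by
  have hb : 0 < b := ha.trans_lt hab
  refine ⟨(b - a) / (2 * b), by positivity, ?_⟩
  have hθ1 : 1 - (b - a) / (2 * b) = (a + b) / (2 * b) := by field_simp; ring
  have hexp : exp ((b - a) / (2 * b)) * (a + b) ≤ 2 * b := by
    have := exp_bound_div_one_sub_of_interval (x := (b - a) / (2 * b)) (by positivity)
      (by rw [← sub_pos, hθ1]; positivity)
    rwa [hθ1, one_div_div, le_div_iff₀ (by positivity)] at this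
  rw [show b * ((b - a) / (2 * b)) = (b - a) / 2 by field_simp]
  nlinarith [mul_le_mul_of_nonneg_left hexp ha, sq_pos_of_pos (sub_pos.2 hab)]

lemma le_mul_of_le_sq_of_le_sq {p q e : ℝ} (hq : 0 ≤ q) (he : 0 ≤ e) (hpe : p ≤ e ^ 2)
    (hpq : p ≤ q ^ 2) : p ≤ q * e := by
  rcases le_total e q with h | h <;> nlinarith [mul_le_mul_of_nonneg_left h hq]

lemma sSup_setOf_le_le_of_lt {f : ℕ → ℝ} (hf : Monotone f) {t : ℝ} {N : ℕ} (h : t < f N) :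
    sSup {n | f n ≤ t} ≤ N :=
  csSup_le' fun n hn => by
    by_contra! hNn
    exact (h.trans_le (hf hNn.le)).not_ge hn

section

variable {Ω : Type*} [MeasurableSpace Ω] {μ : Measure Ω}

lemma exists_lt_integral_min {X : Ω → ℝ} (hX : Integrable X μ) {b : ℝ}
    (hb : b < ∫ ω, X ω ∂μ) : ∃ M : ℝ, 0 < M ∧ b < ∫ ω, min (X ω) M ∂μ := by
  have hlim : Tendsto (fun n : ℕ => ∫ ω, min (X ω) (n + 1 : ℝ) ∂μ) atTop
      (𝓝 (∫ ω, X ω ∂μ)) := by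
    refine tendsto_integral_of_dominated_convergence (fun ω => ‖X ω‖)
      (fun n => hX.aestronglyMeasurable.inf aestronglyMeasurable_const) hX.norm
      (fun n => ae_of_all _ fun ω => ?_) (ae_of_all _ fun ω => ?_)
    · rw [Real.norm_eq_abs, Real.norm_eq_abs, abs_le]
      exact ⟨le_min (neg_abs_le _) (by linarith [abs_nonneg (X ω)]),
        (min_le_left _ _).trans (le_abs_self _)⟩
    · refine tendsto_const_nhds.congr' ?_
      filter_upwards [eventually_ge_atTop ⌈X ω⌉₊] with n hn
      exact (min_eq_left ((Nat.le_ceil _).trans (by exact_mod_cast hn.trans n.le_succ))).symm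
  obtain ⟨n, hn⟩ := (hlim.eventually (lt_mem_nhds hb)).exists
  exact ⟨n + 1, by positivity, hn⟩

lemma exists_pos_mgf_neg_le_exp_neg_mul [IsProbabilityMeasure μ] {X : Ω → ℝ} (hXm : Measurable X)
    (hX0 : ∀ ω, 0 ≤ X ω) (hX : Integrable X μ) {b : ℝ} (hb : b < ∫ ω, X ω ∂μ) :
    ∃ l > 0, mgf X μ (-l) ≤ exp (-(l * b)) := by
  obtain ⟨M, hM, hbM⟩ := exists_lt_integral_min hX hb
  set β := ∫ ω, min (X ω) M ∂μ
  set l := min (1 / M) ((β - b) / M ^ 2)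
  have hl : 0 < l := lt_min (by positivity) (div_pos (sub_pos.2 hbM) (by positivity))
  have hlM : l * M ≤ 1 := (le_div_iff₀ hM).1 (min_le_left _ _)
  have hlM2 : l * M ^ 2 ≤ β - b := (le_div_iff₀ (by positivity)).1 (min_le_right _ _)
  have hmin : Integrable (fun ω => min (X ω) M) μ :=
    hX.mono' (hXm.min measurable_const).aestronglyMeasurable (ae_of_all _ fun ω => by
      rw [Real.norm_eq_abs, abs_of_nonneg (le_min (hX0 ω) hM.le)]; exact min_le_left _ _)
  -- truncation keeps `y = l * min X M` in `[0, 1]`, where `exp (-y) ≤ 1 - y + y ^ 2`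
  have hpt : ∀ ω, exp (-l * X ω) ≤ 1 + (l * M) ^ 2 - l * min (X ω) M := by
    intro ω
    have hy0 : 0 ≤ l * min (X ω) M := mul_nonneg hl.le (le_min (hX0 ω) hM.le)
    have hy1 : l * min (X ω) M ≤ l * M := mul_le_mul_of_nonneg_left (min_le_right _ _) hl.le
    have hquad := abs_le.1 (abs_exp_sub_one_sub_id_le (x := -(l * min (X ω) M))
      (by rw [abs_neg, abs_of_nonneg hy0]; linarith))
    calc exp (-l * X ω) ≤ exp (-(l * min (X ω) M)) := by
          rw [neg_mul, exp_le_exp, neg_le_neg_iff]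
          exact mul_le_mul_of_nonneg_left (min_le_left _ _) hl.le
      _ ≤ 1 + (l * M) ^ 2 - l * min (X ω) M := by nlinarith
  refine ⟨l, hl, ?_⟩
  calc mgf X μ (-l) ≤ ∫ ω, (1 + (l * M) ^ 2 - l * min (X ω) M) ∂μ :=
        integral_mono_of_nonneg (ae_of_all _ fun ω => (exp_pos _).le)
          ((integrable_const _).sub (hmin.const_mul l)) (ae_of_all _ hpt)
    _ = 1 + (-(l * β) + (l * M) ^ 2) := by
        rw [integral_sub (integrable_const _) (hmin.const_mul l), integral_const_mul]
        simp only [integral_const, probReal_univ, one_smul]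
        ring
    _ ≤ exp (-(l * β) + (l * M) ^ 2) := by linarith [add_one_le_exp (-(l * β) + (l * M) ^ 2)]
    _ ≤ exp (-(l * b)) := exp_le_exp.2 (by nlinarith)

section Renewal

variable [IsProbabilityMeasure μ] {W : ℕ → Ω → ℝ}

lemma measureReal_sum_range_succ_le_le (hWm : ∀ k, Measurable (W k))
    (hW0 : ∀ k ω, 0 ≤ W k ω) (hindep : iIndepFun (fun k => W (k + 1)) μ)
    (hident : ∀ k, IdentDistrib (W (k + 1)) (W 1) μ μ) {l : ℝ} (hl : 0 ≤ l) (t : ℝ) (n : ℕ) :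
    μ.real {ω | ∑ j ∈ range (n + 1), W j ω ≤ t} ≤ exp (l * t) * mgf (W 1) μ (-l) ^ n := by
  set S := ∑ i ∈ range n, fun ω => W (i + 1) ω
  have hS : ∀ ω, S ω = ∑ i ∈ range n, W (i + 1) ω := fun ω => Finset.sum_apply ω _ _
  have hsub : {ω | ∑ j ∈ range (n + 1), W j ω ≤ t} ⊆ {ω | S ω ≤ t} := fun ω hω => by
    simp only [Set.mem_ofPred_eq, sum_range_succ', hS] at hω ⊢
    linarith [hW0 0 ω]
  have hint : Integrable (fun ω => exp (-l * S ω)) μ :=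
    hindep.integrable_exp_mul_sum (fun k => hWm (k + 1)) fun k _ =>
      (integrable_const 1).mono' ((hWm (k + 1)).const_mul _).exp.aestronglyMeasurable
        (ae_of_all _ fun ω => by
          rw [Real.norm_eq_abs, abs_of_pos (exp_pos _), exp_le_one_iff]
          nlinarith [hW0 (k + 1) ω])
  have hmgf : mgf S μ (-l) = mgf (W 1) μ (-l) ^ n := by
    rw [hindep.mgf_sum (fun k => hWm (k + 1)), prod_congr rfl fun k _ =>
      mgf_congr_of_identDistrib _ _ (hident k) (-l), prod_const, card_range]
  calc μ.real {ω | ∑ j ∈ range (n + 1), W j ω ≤ t} ≤ μ.real {ω | S ω ≤ t} := measureReal_mono hsub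
    _ ≤ exp (-(-l) * t) * mgf S μ (-l) := measure_le_le_exp_mul_mgf t (neg_nonpos.2 hl) hint
    _ = exp (l * t) * mgf (W 1) μ (-l) ^ n := by rw [neg_neg, hmgf]

lemma exists_pos_forall_eventually_measureReal_sum_range_le_le (hWm : ∀ k, Measurable (W k))
    (hW0 : ∀ k ω, 0 ≤ W k ω) (hindep : iIndepFun (fun k => W (k + 1)) μ)
    (hident : ∀ k, IdentDistrib (W (k + 1)) (W 1) μ μ) (hint : Integrable (W 1) μ) {ρ : ℝ}
    (hρ : 1 < ρ * ∫ ω, W 1 ω ∂μ) :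
    ∃ c > 0, ∀ η > 0, ∀ᶠ t in atTop, ∀ n : ℕ, ρ * t ≤ n →
      μ.real {ω | ∑ j ∈ range n, W j ω ≤ t} ≤ η * exp (-(c * t)) := by
  set β := ∫ ω, W 1 ω ∂μ
  have hρ0 : 0 < ρ := by
    have : 0 ≤ β := integral_nonneg (hW0 1)
    by_contra! h; nlinarith
  obtain ⟨b, hρb, hbβ⟩ := exists_between ((inv_lt_iff_one_lt_mul₀ hρ0).2 (mul_comm ρ β ▸ hρ))
  have hb0 : 0 < b := (inv_pos.2 hρ0).trans hρb
  have hbρ : 1 < b * ρ := (inv_lt_iff_one_lt_mul₀ hρ0).1 hρb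
  obtain ⟨l, hl, hmgf⟩ := exists_pos_mgf_neg_le_exp_neg_mul (hWm 1) (hW0 1) hint hbβ
  have hc : 0 < l * (b * ρ - 1) / 2 := by nlinarith
  refine ⟨_, hc, fun η hη => ?_⟩
  filter_upwards [eventually_gt_atTop 0,
    (tendsto_id.const_mul_atTop hc).eventually_ge_atTop (l * b - log η)] with t ht hlarge n hn
  obtain ⟨k, rfl⟩ : ∃ k, n = k + 1 :=
    Nat.exists_eq_add_one.2 (by exact_mod_cast (mul_pos hρ0 ht).trans_le hn)
  have hk : (ρ * t - 1) * (l * b) ≤ k * (l * b) :=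
    mul_le_mul_of_nonneg_right (by push_cast at hn; linarith) (by positivity)
  calc μ.real {ω | ∑ j ∈ range (k + 1), W j ω ≤ t} ≤ exp (l * t) * mgf (W 1) μ (-l) ^ k :=
        measureReal_sum_range_succ_le_le hWm hW0 hindep hident hl.le t k
    _ ≤ exp (l * t) * exp (-(l * b)) ^ k := by gcongr; exact mgf_nonneg
    _ = exp (l * t - k * (l * b)) := by rw [← exp_nat_mul, ← exp_add]; ring_nf
    _ ≤ exp (log η + -(l * (b * ρ - 1) / 2 * t)) := by
        simp only [id] at hlarge
        gcongr
        nlinarith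
    _ = η * exp (-(l * (b * ρ - 1) / 2 * t)) := by rw [exp_add, exp_log hη]

end Renewal

section BoundedSummands

variable [IsProbabilityMeasure μ]

lemma integrable_of_mem_unitInterval {X : Ω → ℝ} (hX : Measurable X)
    (h01 : ∀ ω, X ω ∈ Set.Icc (0 : ℝ) 1) : Integrable X μ :=
  .of_mem_Icc 0 1 hX.aemeasurable (ae_of_all _ h01)

lemma mgf_le_exp_integral_mul {X : Ω → ℝ} (hX : Measurable X)
    (h01 : ∀ ω, X ω ∈ Set.Icc (0 : ℝ) 1) (θ : ℝ) :
    mgf X μ θ ≤ exp ((∫ ω, X ω ∂μ) * (exp θ - 1)) := by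
  have hint : Integrable X μ := integrable_of_mem_unitInterval hX h01
  calc mgf X μ θ ≤ ∫ ω, (1 + X ω * (exp θ - 1)) ∂μ :=
        integral_mono_of_nonneg (ae_of_all _ fun ω => (exp_pos _).le)
          ((integrable_const 1).add (hint.mul_const _))
          (ae_of_all _ fun ω => exp_mul_le_one_add_mul_exp_sub_one (h01 ω) θ)
    _ = (∫ ω, X ω ∂μ) * (exp θ - 1) + 1 := by
        rw [integral_add (integrable_const 1) (hint.mul_const _), integral_mul_const]
        simp only [integral_const, probReal_univ, one_smul]
        ring
    _ ≤ exp ((∫ ω, X ω ∂μ) * (exp θ - 1)) := add_one_le_exp _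

lemma integral_mem_unitInterval {X : Ω → ℝ} (hX : Measurable X)
    (h01 : ∀ ω, X ω ∈ Set.Icc (0 : ℝ) 1) : ∫ ω, X ω ∂μ ∈ Set.Icc (0 : ℝ) 1 :=
  ⟨integral_nonneg fun ω => (h01 ω).1, (integral_mono (integrable_of_mem_unitInterval hX h01)
    (integrable_const 1) fun ω => (h01 ω).2).trans_eq (by simp)⟩

variable {Y : ℕ → Ω → ℝ}


lemma measureReal_le_sum_range_le_exp (hYm : ∀ k, Measurable (Y k))
    (hY01 : ∀ k ω, Y k ω ∈ Set.Icc (0 : ℝ) 1) (hindep : iIndepFun Y μ) {m : ℝ}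
    (hm : ∀ k, ∫ ω, Y k ω ∂μ ≤ m) {θ : ℝ} (hθ : 0 ≤ θ) (s : ℝ) (n : ℕ) :
    μ.real {ω | s ≤ ∑ k ∈ range n, Y k ω} ≤ exp (-θ * s + n * m * (exp θ - 1)) := by
  have hint : Integrable (fun ω => exp (θ * (∑ k ∈ range n, Y k) ω)) μ :=
    hindep.integrable_exp_mul_sum hYm fun k _ =>
      (integrable_const (exp θ)).mono' ((hYm k).const_mul θ).exp.aestronglyMeasurable
        (ae_of_all _ fun ω => by
          rw [Real.norm_eq_abs, abs_of_pos (exp_pos _), exp_le_exp]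
          exact mul_le_of_le_one_right hθ (hY01 k ω).2)
  have hmgf : mgf (∑ k ∈ range n, Y k) μ θ ≤ exp (m * (exp θ - 1)) ^ n := by
    rw [hindep.mgf_sum hYm]
    refine (prod_le_prod (fun k _ => mgf_nonneg) fun k _ =>
      (mgf_le_exp_integral_mul (hYm k) (hY01 k) θ).trans (exp_le_exp.2 ?_)).trans_eq
      (by rw [prod_const, card_range])
    exact mul_le_mul_of_nonneg_right (hm k) (by linarith [add_one_le_exp θ])
  calc μ.real {ω | s ≤ ∑ k ∈ range n, Y k ω}
      = μ.real {ω | s ≤ (∑ k ∈ range n, Y k) ω} := by simp only [Finset.sum_apply]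
    _ ≤ exp (-θ * s) * mgf (∑ k ∈ range n, Y k) μ θ := measure_ge_le_exp_mul_mgf s hθ hint
    _ ≤ exp (-θ * s) * exp (m * (exp θ - 1)) ^ n := by gcongr
    _ = exp (-θ * s + n * m * (exp θ - 1)) := by rw [← exp_nat_mul, ← exp_add]; ring_nf

lemma mul_measureReal_le_sum_range_le (hYm : ∀ k, Measurable (Y k))
    (hY01 : ∀ k ω, Y k ω ∈ Set.Icc (0 : ℝ) 1) {m : ℝ} (hm : ∀ k, ∫ ω, Y k ω ∂μ ≤ m)
    (s : ℝ) (n : ℕ) :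
    s * μ.real {ω | s ≤ ∑ k ∈ range n, Y k ω} ≤ n * m := by
  have hint : ∀ k, Integrable (Y k) μ := fun k => integrable_of_mem_unitInterval (hYm k) (hY01 k)
  calc s * μ.real {ω | s ≤ ∑ k ∈ range n, Y k ω} ≤ ∫ ω, ∑ k ∈ range n, Y k ω ∂μ :=
        mul_meas_ge_le_integral_of_nonneg (ae_of_all _ fun ω => sum_nonneg fun k _ => (hY01 k ω).1)
          (integrable_finsetSum _ fun k _ => hint k) s
    _ = ∑ k ∈ range n, ∫ ω, Y k ω ∂μ := integral_finsetSum _ fun k _ => hint k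
    _ ≤ ∑ _k ∈ range n, m := sum_le_sum fun k _ => hm k
    _ = n * m := by rw [sum_const, card_range, nsmul_eq_mul]

lemma exists_forall_measureReal_le_sum_range_le {a b : ℝ} (ha : 0 ≤ a) (hab : a < b) :
    ∃ q, 0 ≤ q ∧ q < 1 ∧ ∃ c > 0, ∀ (Y : ℕ → Ω → ℝ) (m : ℝ), (∀ k, Measurable (Y k)) →
      (∀ k ω, Y k ω ∈ Set.Icc (0 : ℝ) 1) → iIndepFun Y μ → (∀ k, ∫ ω, Y k ω ∂μ ≤ m) →
      0 < m → ∀ (n : ℕ) (x : ℝ), 0 < x → n ≤ a * x →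
        μ.real {ω | b * m * x ≤ ∑ k ∈ range n, Y k ω} ≤ q * exp (-(c * m * x)) := by
  have hb : 0 < b := ha.trans_lt hab
  obtain ⟨θ, hθ, hθab⟩ := exists_pos_mul_exp_sub_one_lt ha hab
  refine ⟨√(a / b), sqrt_nonneg _,
    (sqrt_lt' one_pos).2 (by rw [one_pow]; exact (div_lt_one hb).2 hab),
    (b * θ - a * (exp θ - 1)) / 2, by linarith, ?_⟩
  intro Y m hYm hY01 hindep hm hm0 n x hx hn
  -- Markov bounds the probability by `a / b < 1`, Chernoff by `exp (-2 c m x)`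
  apply le_mul_of_le_sq_of_le_sq (sqrt_nonneg _) (exp_pos _).le
  · rw [← exp_nat_mul]
    refine (measureReal_le_sum_range_le_exp hYm hY01 hindep hm hθ.le _ n).trans (exp_le_exp.2 ?_)
    have : n * m * (exp θ - 1) ≤ a * x * m * (exp θ - 1) :=
      mul_le_mul_of_nonneg_right (mul_le_mul_of_nonneg_right hn hm0.le)
        (by linarith [add_one_le_exp θ])
    push_cast
    nlinarith
  · rw [sq_sqrt (by positivity), le_div_iff₀ hb]
    have hmx : 0 < m * x := mul_pos hm0 hx
    have := mul_measureReal_le_sum_range_le hYm hY01 hm (b * m * x) n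
    nlinarith [mul_le_mul_of_nonneg_right hn hm0.le]

end BoundedSummands

lemma measureReal_lt_sum_range_sSup_le [IsFiniteMeasure μ] {W Y : ℕ → Ω → ℝ}
    (hW0 : ∀ k ω, 0 ≤ W k ω) (hY0 : ∀ k ω, 0 ≤ Y k ω) (s t : ℝ) (N : ℕ) :
    μ.real {ω | s < ∑ k ∈ range (sSup {n : ℕ | ∑ j ∈ range n, W j ω ≤ t}), Y k ω} ≤
      μ.real {ω | ∑ j ∈ range N, W j ω ≤ t} + μ.real {ω | s ≤ ∑ k ∈ range N, Y k ω} := by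
  refine (measureReal_mono fun ω hω => ?_).trans (measureReal_union_le _ _)
  by_cases hWN : ∑ j ∈ range N, W j ω ≤ t
  · exact Or.inl hWN
  have hmono : Monotone fun n => ∑ j ∈ range n, W j ω :=
    monotone_nat_of_le_succ fun n => by simp [sum_range_succ, hW0 n ω]
  refine Or.inr (show s ≤ _ from (lt_of_lt_of_le hω ?_).le)
  exact sum_le_sum_of_subset_of_nonneg
    (range_subset_range.2 (sSup_setOf_le_le_of_lt hmono (not_le.1 hWN))) fun k _ _ => hY0 k ω

end

theorem renewal_reward_upper_bound {Ω : Type*} [MeasureSpace Ω]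
    [IsProbabilityMeasure (ℙ : Measure Ω)]
    (W : ℕ → Ω → ℝ) (β : ℝ) (hβ : 0 < β)
    (hWmeas : ∀ k, Measurable (W k))
    (hWnonneg : ∀ k ω, 0 ≤ W k ω)
    (hWindep : iIndepFun (fun k => W (k + 1)) ℙ)
    (hWident : ∀ k, Measure.map (W (k + 1)) ℙ = Measure.map (W 1) ℙ)
    (hWint : Integrable (W 1))
    (hWmean : ∫ ω, W 1 ω = β)
    (ε : ℝ) (hε : ε ∈ Set.Ioc (0 : ℝ) 1) :
    ∃ C : ℝ, 0 < C ∧ ∃ T : ℝ, ∀ (Y : ℕ → Ω → ℝ) (m : ℝ),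
      (∀ k, Measurable (Y k)) →
      (∀ k ω, Y k ω ∈ Set.Icc (0 : ℝ) 1) →
      iIndepFun Y ℙ →
      (∀ k, Measure.map (Y k) ℙ = Measure.map (Y 0) ℙ) →
      (∫ ω, Y 0 ω = m) →
      IndepFun (fun ω k => W k ω) (fun ω k => Y k ω) ℙ →
      ∀ t : ℝ, T ≤ t →
        (ℙ {ω | (1 + ε) * β⁻¹ * m * t <
              ∑ k ∈ Finset.range
                (sSup {n : ℕ | ∑ j ∈ Finset.range n, W j ω ≤ t}), Y k ω}).toReal
          ≤ Real.exp (-C * m * t) := by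
  obtain ⟨hε0, -⟩ := hε
  obtain ⟨q, hq0, hq1, c₂, hc₂, hY⟩ := exists_forall_measureReal_le_sum_range_le
    (μ := (ℙ : Measure Ω)) (a := (1 + 3 * ε / 4) * β⁻¹) (b := (1 + ε) * β⁻¹) (by positivity)
    (by gcongr; linarith)
  obtain ⟨c₁, hc₁, hW⟩ := exists_pos_forall_eventually_measureReal_sum_range_le_le hWmeas
    hWnonneg hWindep (fun k => ⟨(hWmeas _).aemeasurable, (hWmeas 1).aemeasurable, hWident k⟩)
    hWint (ρ := (1 + ε / 2) * β⁻¹) (by rw [hWmean, inv_mul_cancel_right₀ hβ.ne']; linarith)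
  obtain ⟨T, hT⟩ := eventually_atTop.1 ((hW (1 - q) (sub_pos.2 hq1)).and
    ((tendsto_id.const_mul_atTop (by positivity : 0 < ε / 4 * β⁻¹)).eventually_ge_atTop 1))
  refine ⟨min c₁ c₂, by positivity, T, fun Y m hYm hY01 hYindep hYident hYmean _ t ht => ?_⟩
  obtain ⟨hWt, hlarge : 1 ≤ ε / 4 * β⁻¹ * t⟩ := hT t ht
  have ht0 : 0 < t := pos_of_mul_pos_right (one_pos.trans_le hlarge) (by positivity)
  obtain ⟨hm0, hm1⟩ := hYmean ▸ integral_mem_unitInterval (hYm 0) (hY01 0)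
  rcases hm0.eq_or_lt with rfl | hm0
  · exact measureReal_le_one.trans (by simp)
  have hYmean' : ∀ k, ∫ ω, Y k ω ≤ m := fun k => (IdentDistrib.integral_eq
    ⟨(hYm k).aemeasurable, (hYm 0).aemeasurable, hYident k⟩).trans hYmean |>.le
  set N := ⌈(1 + ε / 2) * β⁻¹ * t⌉₊
  have hN : (N : ℝ) ≤ (1 + 3 * ε / 4) * β⁻¹ * t :=
    (Nat.ceil_lt_add_one (by positivity)).le.trans (by linarith)
  calc _ ≤ _ := measureReal_lt_sum_range_sSup_le hWnonneg (fun k ω => (hY01 k ω).1) _ t N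
    _ ≤ (1 - q) * exp (-(c₁ * t)) + q * exp (-(c₂ * m * t)) :=
        add_le_add (hWt N (Nat.le_ceil _)) (hY Y m hYm hY01 hYindep hYmean' hm0 N t ht0 hN)
    _ ≤ (1 - q) * exp (-min c₁ c₂ * m * t) + q * exp (-min c₁ c₂ * m * t) := by
        gcongr
        · nlinarith [mul_le_mul_of_nonneg_right ((mul_le_of_le_one_right (by positivity) hm1).trans
            (min_le_left c₁ c₂)) ht0.le]
        · nlinarith [mul_le_mul_of_nonneg_right (min_le_right c₁ c₂) (mul_pos hm0 ht0).le]
    _ = exp (-min c₁ c₂ * m * t) := by ring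
end

section
/- Let H̄* : [0,∞) → [0,1] be nonincreasing with H̄*(s) ≤ C₁/(1+s)^{2+δ} for C₁ ≥ 1, δ ∈ (0,1], and let Γ(σ) = σ + C₂·a·σ^γ with γ ∈ (0, 1/2], a, C₂ > 0. Suppose ∫_0^∞ H̄*(s) ds ≤ (1 + ε/2)·m for some m, ε > 0. Then for all sufficiently small a > 0, ∫_0^∞ Γ(H̄*(s))/(1+as) ds ≤ (1+ε)·m. -/
open Real MeasureTheory Set Filter Topology

/-! For `0 ≤ a ≤ 1` one has `a / (1 + a s) ≤ 1 / (1 + s)`, so the integrand is dominated,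
uniformly in `a`, by `H̄*(s) + |C₂| H̄*(s)^γ / (1 + s)`. The tail bound makes this dominating
function integrable, as `C₁ (1+s)^{-(2+δ)} + |C₂| C₁^γ (1+s)^{-(2+δ)γ-1}` with both exponents
beyond `1`. Dominated convergence then gives `∫ Γ(H̄*)/(1 + a s) → ∫ H̄* ≤ (1 + ε/2) m` as
`a → 0⁺`, which is eventually below `(1 + ε) m`. -/

theorem integrableOn_Ioi_div_one_add_rpow {p : ℝ} (hp : 1 < p) (C : ℝ) :
    IntegrableOn (fun s : ℝ => C / (1 + s) ^ p) (Ioi 0) := by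
  have h : Integrable (fun x : ℝ => (1 + ‖x‖) ^ (-p)) :=
    integrable_one_add_norm (by simpa using hp)
  refine ((h.const_mul C).integrableOn).congr_fun (fun s hs => ?_) measurableSet_Ioi
  have hs₀ : 0 < s := hs
  simp only [norm_eq_abs, abs_of_pos hs₀, rpow_neg (by linarith : (0:ℝ) ≤ 1 + s), div_eq_mul_inv]

theorem rpow_le_div_one_add_rpow_mul {h C s p γ : ℝ} (hh : 0 ≤ h) (hs : 0 ≤ s) (hγ : 0 ≤ γ)
    (htail : h ≤ C / (1 + s) ^ p) : h ^ γ ≤ C ^ γ / (1 + s) ^ (p * γ) := by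
  have hx : 0 < (1 + s) ^ p := by positivity
  have hC : 0 ≤ C := (mul_nonneg hh hx.le).trans ((le_div_iff₀ hx).1 htail)
  calc h ^ γ ≤ (C / (1 + s) ^ p) ^ γ := rpow_le_rpow hh htail hγ
    _ = C ^ γ / (1 + s) ^ (p * γ) := by
      rw [div_rpow hC hx.le, ← rpow_mul (by linarith)]

theorem abs_add_mul_div_one_add_mul_le {h y c a s : ℝ} (ha₀ : 0 ≤ a) (ha₁ : a ≤ 1) (hs : 0 ≤ s)
    (hh : 0 ≤ h) (hy : 0 ≤ y) :
    |(h + c * a * y) / (1 + a * s)| ≤ h + |c| * y / (1 + s) := by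
  have hden : 1 ≤ 1 + a * s := by nlinarith
  have hdisc : a / (1 + a * s) ≤ 1 / (1 + s) := by
    rw [div_le_div_iff₀ (by linarith) (by linarith)]; nlinarith
  rw [abs_div, abs_of_pos (by linarith : 0 < 1 + a * s)]
  calc |h + c * a * y| / (1 + a * s) ≤ (h + |c| * a * y) / (1 + a * s) := by
        gcongr
        calc |h + c * a * y| ≤ |h| + |c * a * y| := abs_add_le _ _
          _ = h + |c| * a * y := by
            rw [abs_mul, abs_mul, abs_of_nonneg hh, abs_of_nonneg ha₀, abs_of_nonneg hy]
    _ = h / (1 + a * s) + |c| * y * (a / (1 + a * s)) := by ring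
    _ ≤ h + |c| * y * (1 / (1 + s)) := by
        gcongr
        exact div_le_self hh hden
    _ = h + |c| * y / (1 + s) := by ring

theorem tendsto_setIntegral_Ioi_add_mul_rpow_div_one_add_mul {H : ℝ → ℝ} {C p γ : ℝ} (c : ℝ)
    (hp : 1 < p) (hγ : 0 < γ) (hH_meas : AEMeasurable H (volume.restrict (Ioi 0)))
    (hH_nonneg : ∀ s ∈ Ioi (0 : ℝ), 0 ≤ H s) (hH_tail : ∀ s ∈ Ioi (0 : ℝ), H s ≤ C / (1 + s) ^ p) :
    Tendsto (fun a => ∫ s in Ioi 0, (H s + c * a * H s ^ γ) / (1 + a * s)) (𝓝[>] 0)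
      (𝓝 (∫ s in Ioi 0, H s)) := by
  refine tendsto_integral_filter_of_dominated_convergence
    (fun s => C / (1 + s) ^ p + |c| * C ^ γ / (1 + s) ^ (p * γ + 1)) ?_ ?_ ?_ ?_
  · exact Eventually.of_forall fun a => (by fun_prop : AEMeasurable _ _).aestronglyMeasurable
  · filter_upwards [Ioc_mem_nhdsGT zero_lt_one] with a ha
    filter_upwards [ae_restrict_mem measurableSet_Ioi] with s hs
    have hH := hH_nonneg s hs
    have hs₁ : 0 < 1 + s := by linarith [mem_Ioi.1 hs]
    calc ‖(H s + c * a * H s ^ γ) / (1 + a * s)‖ ≤ H s + |c| * H s ^ γ / (1 + s) :=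
          abs_add_mul_div_one_add_mul_le ha.1.le ha.2 hs.le hH (rpow_nonneg hH γ)
      _ ≤ C / (1 + s) ^ p + |c| * (C ^ γ / (1 + s) ^ (p * γ)) / (1 + s) := by
          gcongr
          exacts [hH_tail s hs, rpow_le_div_one_add_rpow_mul hH hs.le hγ.le (hH_tail s hs)]
      _ = C / (1 + s) ^ p + |c| * C ^ γ / (1 + s) ^ (p * γ + 1) := by
          rw [rpow_add_one hs₁.ne', mul_div_assoc, div_div, mul_div_assoc]
  · exact (integrableOn_Ioi_div_one_add_rpow hp C).add
      (integrableOn_Ioi_div_one_add_rpow (by nlinarith) _)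
  · refine Eventually.of_forall fun s => tendsto_nhdsWithin_of_tendsto_nhds ?_
    have : ContinuousAt (fun a => (H s + c * a * H s ^ γ) / (1 + a * s)) 0 :=
      ContinuousAt.div (by fun_prop) (by fun_prop) (by simp)
    simpa using this.tendsto

theorem gamma_integral_bound_general (C₁ C₂ γ δ m ε : ℝ) (Hbar : ℝ → ℝ)
    (hδ : δ ∈ Set.Ioc (0 : ℝ) 1)
    (hγ : γ ∈ Set.Ioc (0 : ℝ) (1 / 2))
    (hm : 0 < m) (hε : 0 < ε)
    (hHnonneg : ∀ s : ℝ, 0 ≤ s → Hbar s ∈ Set.Icc (0 : ℝ) 1)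
    (hHmono : ∀ s₁ s₂ : ℝ, 0 ≤ s₁ → s₁ ≤ s₂ → Hbar s₂ ≤ Hbar s₁)
    (hHtail : ∀ s : ℝ, 0 ≤ s → Hbar s ≤ C₁ / (1 + s) ^ (2 + δ))
    (hHint : ∫ s in Set.Ioi (0 : ℝ), Hbar s ≤ (1 + ε / 2) * m) :
    ∃ a₀ : ℝ, 0 < a₀ ∧ ∀ a : ℝ, a ∈ Set.Ioc (0 : ℝ) a₀ →
      ∫ s in Set.Ioi (0 : ℝ), (Hbar s + C₂ * a * Hbar s ^ γ) / (1 + a * s)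
        ≤ (1 + ε) * m := by
  have hH_meas : AEMeasurable Hbar (volume.restrict (Ioi 0)) :=
    aemeasurable_restrict_of_antitoneOn measurableSet_Ioi
      fun s hs t _ hst => hHmono s t (le_of_lt hs) hst
  have hlim := tendsto_setIntegral_Ioi_add_mul_rpow_div_one_add_mul C₂
    (by linarith [hδ.1] : 1 < 2 + δ) hγ.1 hH_meas
    (fun s hs => (hHnonneg s (le_of_lt hs)).1) (fun s hs => hHtail s (le_of_lt hs))
  have hlt : ∫ s in Ioi 0, Hbar s < (1 + ε) * m := by nlinarith
  obtain ⟨a₀, ha₀, hsub⟩ :=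
    mem_nhdsGT_iff_exists_Ioc_subset.1 (hlim.eventually (gt_mem_nhds hlt))
  exact ⟨a₀, ha₀, fun a ha => (hsub ha).le⟩

theorem gamma_integral_bound (C₁ C₂ γ δ m ε : ℝ) (Hbar : ℝ → ℝ)
    (hC₁ : 1 ≤ C₁) (hδ : δ ∈ Set.Ioc (0 : ℝ) 1)
    (hγ : γ ∈ Set.Ioc (0 : ℝ) (1 / 2)) (hC₂ : 0 < C₂)
    (hm : 0 < m) (hε : 0 < ε)
    (hHnonneg : ∀ s : ℝ, 0 ≤ s → Hbar s ∈ Set.Icc (0 : ℝ) 1)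
    (hHmono : ∀ s₁ s₂ : ℝ, 0 ≤ s₁ → s₁ ≤ s₂ → Hbar s₂ ≤ Hbar s₁)
    (hHtail : ∀ s : ℝ, 0 ≤ s → Hbar s ≤ C₁ / (1 + s) ^ (2 + δ))
    (hHint : ∫ s in Set.Ioi (0 : ℝ), Hbar s ≤ (1 + ε / 2) * m) :
    ∃ a₀ : ℝ, 0 < a₀ ∧ ∀ a : ℝ, a ∈ Set.Ioc (0 : ℝ) a₀ →
      ∫ s in Set.Ioi (0 : ℝ), (Hbar s + C₂ * a * Hbar s ^ γ) / (1 + a * s)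
        ≤ (1 + ε) * m :=
  gamma_integral_bound_general C₁ C₂ γ δ m ε Hbar hδ hγ hm hε hHnonneg hHmono hHtail hHint
end

section
/- Let φ be the piecewise density with parameter b ≥ 2 and Φ its CDF, and let H̄* be defined by convolution of a CDF H with Φ (H̄*(s) = 1 − (H ∗ Φ)(s)). Then for any s ≥ 0 and any increment 0 ≤ h ≤ 1/b³ (in particular for consecutive grid points v_{j+1} = v_j + 1/b³), H̄*(s + 1/b³)/H̄*(s) ≥ e^{−1/b²} ≥ 1/2, provided H̄*(s) > 0. -/
open Real MeasureTheory

/-- The convolved tail H̄*(s) = ∫ (1 − Φ(s − s')) dμ(s'). -/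
noncomputable def Hbar (b : ℤ) (μ : Measure ℝ) (s : ℝ) : ℝ :=
  ∫ s', (1 - Phi b (s - s')) ∂μ

/-!
For `t > 0` the density is `φ(t) = (2/3) b · min (b t) (e^{1 - b t})`, and a shift by `h ≥ 0` costs
each argument of the `min` at most a factor `e^{-b h}`; hence `φ(t + h) ≥ e^{-b h} φ(t)`.
Integrating over the tail `(t, ∞)` transfers this to `1 - Φ`, and integrating against `μ` to `H̄*`.
For `h ≤ 1/b³` we have `b h ≤ 1/b² ≤ 1/4`, and `e^{-1/4} ≥ 3/4`.
-/

open Set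

theorem setIntegral_Ioi_comp_add_right {E : Type*} [NormedAddCommGroup E] [NormedSpace ℝ E]
    (f : ℝ → E) (t h : ℝ) : ∫ x in Ioi t, f (x + h) = ∫ x in Ioi (t + h), f x := by
  simpa [preimage_add_const_Ioi] using
    (measurePreserving_add_right volume h).setIntegral_preimage_emb
      (measurableEmbedding_addRight h) f (Ioi (t + h))

theorem mul_setIntegral_Ioi_le_setIntegral_Ioi_add {f : ℝ → ℝ} (hf : Integrable f) {c h : ℝ}
    (hfc : ∀ x, c * f x ≤ f (x + h)) (t : ℝ) :
    c * ∫ x in Ioi t, f x ≤ ∫ x in Ioi (t + h), f x := by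
  rw [← setIntegral_Ioi_comp_add_right, ← integral_const_mul]
  exact setIntegral_mono (hf.integrableOn.const_mul c) (hf.comp_add_right h).integrableOn hfc

section Phi

variable {b : ℤ}

theorem phi_of_nonpos_s15 {t : ℝ} (ht : t ≤ 0) : phi b t = 0 := if_pos ht

theorem phi_eq_min (hb : 0 < b) {t : ℝ} (ht : 0 < t) :
    phi b t = 2 / 3 * b * min (b * t) (exp (1 - b * t)) := by
  have hb' : (0 : ℝ) < b := by exact_mod_cast hb
  rw [phi, if_neg ht.not_ge]
  split_ifs with hle
  · have hbt : b * t ≤ 1 := by rwa [le_div_iff₀' hb'] at hle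
    rw [min_eq_left (hbt.trans (one_le_exp (by linarith)))]
    ring
  · have hbt : 1 < b * t := by rwa [not_le, div_lt_iff₀' hb'] at hle
    rw [min_eq_right ((exp_le_one_iff.2 (by linarith)).trans hbt.le),
      show 1 - b * t = 1 + -b * t by ring, exp_add]
    ring

theorem phi_nonneg (hb : 0 < b) (t : ℝ) : 0 ≤ phi b t := by
  rcases le_or_gt t 0 with ht | ht
  · rw [phi_of_nonpos_s15 ht]
  · have hb' : (0 : ℝ) < b := by exact_mod_cast hb
    rw [phi_eq_min hb ht]
    positivity

theorem exp_neg_mul_phi_le_phi_add (hb : 0 < b) {h : ℝ} (hh : 0 ≤ h) (t : ℝ) :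
    exp (-b * h) * phi b t ≤ phi b (t + h) := by
  have hb' : (0 : ℝ) < b := by exact_mod_cast hb
  rcases le_or_gt t 0 with ht | ht
  · rw [phi_of_nonpos_s15 ht, mul_zero]
    exact phi_nonneg hb _
  rw [phi_eq_min hb ht, phi_eq_min hb (by linarith), mul_left_comm,
    mul_min_of_nonneg _ _ (exp_pos _).le]
  gcongr 2 / 3 * b * ?_
  apply min_le_min
  · calc exp (-b * h) * (b * t) ≤ 1 * (b * t) := by
          gcongr
          exact exp_le_one_iff.2 (by nlinarith)
      _ ≤ b * (t + h) := by nlinarith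
  · rw [← exp_add]
    ring_nf
    rfl

theorem phi_eqOn_Ioc (b : ℤ) :
    EqOn (phi b) (fun t ↦ 2 / 3 * b ^ 2 * t) (Ioc 0 (1 / b)) := fun _ ht ↦ by
  rw [phi, if_neg ht.1.not_ge, if_pos ht.2]

theorem phi_eqOn_Ioi (hb : 0 < b) :
    EqOn (phi b) (fun t ↦ 2 / 3 * exp 1 * b * exp (-b * t)) (Ioi (1 / b)) := fun t ht ↦ by
  have hb' : (0 : ℝ) < b := by exact_mod_cast hb
  have ht' : 1 / (b : ℝ) < t := ht
  rw [phi, if_neg (by have := one_div_pos.2 hb'; linarith), if_neg ht'.not_ge]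

theorem integrableOn_phi_Ioc (b : ℤ) : IntegrableOn (phi b) (Ioc 0 (1 / b)) := by
  rw [integrableOn_congr_fun (phi_eqOn_Ioc b) measurableSet_Ioc]
  exact (continuous_const.mul continuous_id).integrableOn_Ioc

theorem integrableOn_phi_Ioi (hb : 0 < b) : IntegrableOn (phi b) (Ioi (1 / b)) := by
  have hb' : (0 : ℝ) < b := by exact_mod_cast hb
  rw [integrableOn_congr_fun (phi_eqOn_Ioi hb) measurableSet_Ioi]
  exact (exp_neg_integrableOn_Ioi _ hb').const_mul _

theorem setIntegral_phi_Ioc (hb : 0 < b) : ∫ t in Ioc 0 (1 / (b : ℝ)), phi b t = 1 / 3 := by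
  have hb' : (0 : ℝ) < b := by exact_mod_cast hb
  rw [setIntegral_congr_fun measurableSet_Ioc (phi_eqOn_Ioc b),
    ← intervalIntegral.integral_of_le (by positivity), intervalIntegral.integral_const_mul,
    integral_id]
  field_simp
  ring

theorem setIntegral_phi_Ioi (hb : 0 < b) : ∫ t in Ioi (1 / (b : ℝ)), phi b t = 2 / 3 := by
  have hb' : (0 : ℝ) < b := by exact_mod_cast hb
  rw [setIntegral_congr_fun measurableSet_Ioi (phi_eqOn_Ioi hb), integral_const_mul,
    integral_exp_mul_Ioi (neg_lt_zero.2 hb'), show -(b : ℝ) * (1 / b) = -1 by field_simp,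
    exp_neg]
  field_simp [(exp_pos 1).ne']

theorem integrable_phi (hb : 0 < b) : Integrable (phi b) := by
  have hb' : (0 : ℝ) < b := by exact_mod_cast hb
  have hIic : IntegrableOn (phi b) (Iic 0) :=
    integrableOn_zero.congr_fun (fun _ ht ↦ (phi_of_nonpos_s15 ht).symm) measurableSet_Iic
  rw [← integrableOn_univ, ← Iic_union_Ioi (a := 1 / (b : ℝ)),
    ← Iic_union_Ioc_eq_Iic (one_div_pos.2 hb').le]
  exact (hIic.union (integrableOn_phi_Ioc b)).union (integrableOn_phi_Ioi hb)

theorem integral_phi (hb : 0 < b) : ∫ t, phi b t = 1 := by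
  have hb' : (0 : ℝ) < b := by exact_mod_cast hb
  rw [← setIntegral_eq_integral_of_forall_compl_eq_zero (s := Ioi 0)
      fun t ht ↦ phi_of_nonpos_s15 (not_lt.1 ht),
    ← Ioc_union_Ioi_eq_Ioi (one_div_pos.2 hb').le,
    setIntegral_union (Ioc_disjoint_Ioi le_rfl) measurableSet_Ioi (integrableOn_phi_Ioc b)
      (integrableOn_phi_Ioi hb), setIntegral_phi_Ioc hb, setIntegral_phi_Ioi hb]
  norm_num

theorem one_sub_Phi (hb : 0 < b) (t : ℝ) : 1 - Phi b t = ∫ x in Ioi t, phi b x := by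
  rw [← integral_phi hb, Phi, ← intervalIntegral.integral_Iic_add_Ioi
    (integrable_phi hb).integrableOn (integrable_phi hb).integrableOn]
  ring

theorem Phi_nonneg (hb : 0 < b) (t : ℝ) : 0 ≤ Phi b t :=
  setIntegral_nonneg measurableSet_Iic fun x _ ↦ phi_nonneg hb x

theorem Phi_le_one (hb : 0 < b) (t : ℝ) : Phi b t ≤ 1 := by
  have := one_sub_Phi hb t ▸ setIntegral_nonneg measurableSet_Ioi fun x _ ↦ phi_nonneg hb x
  linarith

theorem monotone_Phi (hb : 0 < b) : Monotone (Phi b) := fun _ _ hst ↦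
  setIntegral_mono_set (integrable_phi hb).integrableOn
    (.of_forall (phi_nonneg hb)) (Iic_subset_Iic.2 hst).eventuallyLE

theorem exp_neg_mul_one_sub_Phi_le_one_sub_Phi_add (hb : 0 < b) {h : ℝ} (hh : 0 ≤ h) (t : ℝ) :
    exp (-b * h) * (1 - Phi b t) ≤ 1 - Phi b (t + h) := by
  rw [one_sub_Phi hb, one_sub_Phi hb]
  exact mul_setIntegral_Ioi_le_setIntegral_Ioi_add (integrable_phi hb)
    (exp_neg_mul_phi_le_phi_add hb hh) t

theorem integrable_one_sub_Phi_sub (hb : 0 < b) (μ : Measure ℝ) [IsFiniteMeasure μ] (s : ℝ) :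
    Integrable (fun x ↦ 1 - Phi b (s - x)) μ := by
  refine .of_bound (measurable_const.sub ((monotone_Phi hb).measurable.comp
    (measurable_const.sub measurable_id))).aestronglyMeasurable 1 (.of_forall fun x ↦ ?_)
  rw [Real.norm_eq_abs, abs_le]
  constructor <;> linarith [Phi_nonneg hb (s - x), Phi_le_one hb (s - x)]

theorem exp_neg_mul_Hbar_le_Hbar_add (hb : 0 < b) (μ : Measure ℝ) [IsFiniteMeasure μ] {h : ℝ}
    (hh : 0 ≤ h) (s : ℝ) : exp (-b * h) * Hbar b μ s ≤ Hbar b μ (s + h) := by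
  rw [Hbar, Hbar, ← integral_const_mul]
  refine integral_mono ((integrable_one_sub_Phi_sub hb μ s).const_mul _)
    (integrable_one_sub_Phi_sub hb μ (s + h)) fun x ↦ ?_
  simpa only [sub_add_eq_add_sub] using exp_neg_mul_one_sub_Phi_le_one_sub_Phi_add hb hh (s - x)

end Phi

theorem convolved_tail_ratio_bound_general (b : ℤ) (hb : 2 ≤ b)
    (μ : Measure ℝ) [IsProbabilityMeasure μ] :
    ∀ s h : ℝ, 0 ≤ s → 0 ≤ h → h ≤ 1 / (b : ℝ) ^ 3 →
      0 < Hbar b μ s →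
        Hbar b μ (s + h) / Hbar b μ s ≥ Real.exp (-1 / (b : ℝ) ^ 2) ∧
        Real.exp (-1 / (b : ℝ) ^ 2) ≥ 1 / 2 := by
  intro s h _ hh hhb hpos
  have hb' : (2 : ℝ) ≤ b := by exact_mod_cast hb
  have hbh : b * h ≤ 1 / (b : ℝ) ^ 2 := by
    calc b * h ≤ b * (1 / (b : ℝ) ^ 3) := by gcongr
      _ = 1 / (b : ℝ) ^ 2 := by field_simp
  have hb2 : 1 / (b : ℝ) ^ 2 ≤ 1 / 4 := by
    rw [div_le_div_iff₀ (by positivity) (by norm_num)]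
    nlinarith
  refine ⟨(le_div_iff₀ hpos).2 ?_, ?_⟩
  · calc exp (-1 / (b : ℝ) ^ 2) * Hbar b μ s ≤ exp (-b * h) * Hbar b μ s := by
          gcongr
          linarith [neg_div (b ^ 2 : ℝ) 1]
      _ ≤ Hbar b μ (s + h) := exp_neg_mul_Hbar_le_Hbar_add (by omega) μ hh s
  · linarith [add_one_le_exp (-1 / (b : ℝ) ^ 2), neg_div (b ^ 2 : ℝ) 1]

theorem convolved_tail_ratio_bound (b : ℤ) (hb : 2 ≤ b)
    (μ : Measure ℝ) [IsProbabilityMeasure μ] (hμ : μ (Set.Iio 0) = 0) :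
    ∀ s h : ℝ, 0 ≤ s → 0 ≤ h → h ≤ 1 / (b : ℝ) ^ 3 →
      0 < Hbar b μ s →
        Hbar b μ (s + h) / Hbar b μ s ≥ Real.exp (-1 / (b : ℝ) ^ 2) ∧
        Real.exp (-1 / (b : ℝ) ^ 2) ≥ 1 / 2 :=
  convolved_tail_ratio_bound_general b hb μ
end
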